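/- (q-addition formula for cosine) Let q be a real number with 0 < q < 1 and let x, y be complex numbers with |x| < 1/(1−q) and |y| < 1/(1−q). Then the series cos_q(x ⊕_q y) := ∑_{n=0}^{∞} (−1)^n (x ⊕_q y)^{2n}/[2n]_q! converges and cos_q(x ⊕_q y) = cos_q(x)·cos_q(y) − sin_q(x)·sin_q(y). -/

import Mathlib

open Filter Topology

/-- The `q`-basic number `[n]_q = (1 - q^n)/(1 - q)`. -/
noncomputable def qNum (q : ℝ) (n : ℕ) : ℝ := (1 - q ^ n) / (1 - q)

/-- The `q`-factorial `[n]_q! = [1]_q [2]_q ⋯ [n]_q`, with `[0]_q! = 1`. -/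
noncomputable def qFact (q : ℝ) (n : ℕ) : ℝ := ∏ j ∈ Finset.range n, qNum q (j + 1)

/-- The Gaussian binomial coefficient `[n]_q! / ([k]_q! [n-k]_q!)`. -/
noncomputable def qBinom (q : ℝ) (n k : ℕ) : ℝ := qFact q n / (qFact q k * qFact q (n - k))

/-- The `q`-exponential `e_q(z) = ∑ z^n / [n]_q!`. -/
noncomputable def qExp (q : ℝ) (z : ℂ) : ℂ := ∑' n : ℕ, z ^ n / (qFact q n : ℂ)

/-- The `q`-sine `sin_q(z) = ∑ (-1)^n z^(2n+1) / [2n+1]_q!`. -/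
noncomputable def qSin (q : ℝ) (z : ℂ) : ℂ :=
  ∑' n : ℕ, (-1 : ℂ) ^ n * z ^ (2 * n + 1) / (qFact q (2 * n + 1) : ℂ)

/-- The `q`-cosine `cos_q(z) = ∑ (-1)^n z^(2n) / [2n]_q!`. -/
noncomputable def qCos (q : ℝ) (z : ℂ) : ℂ :=
  ∑' n : ℕ, (-1 : ℂ) ^ n * z ^ (2 * n) / (qFact q (2 * n) : ℂ)

/-- The `q`-addition power `(x ⊕_q y)^n = ∑_{k=0}^n binom_q(n,k) x^k y^(n-k)`. -/
noncomputable def qAddPow (q : ℝ) (x y : ℂ) (n : ℕ) : ℂ :=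
  ∑ k ∈ Finset.range (n + 1), (qBinom q n k : ℂ) * x ^ k * y ^ (n - k)

/-- The `q`-subtraction power `(x ⊖_q y)^n = ∑_{k=0}^n binom_q(n,k) (-1)^(n-k) x^k y^(n-k)`. -/
noncomputable def qSubPow (q : ℝ) (x y : ℂ) (n : ℕ) : ℂ :=
  ∑ k ∈ Finset.range (n + 1), (qBinom q n k : ℂ) * (-1 : ℂ) ^ (n - k) * x ^ k * y ^ (n - k)

/-- The `q`-tangent `tan_q(z) = sin_q(z)/cos_q(z)`. -/
noncomputable def qTan (q : ℝ) (z : ℂ) : ℂ := qSin q z / qCos q z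

/-- The second `q`-exponential `E_q(z) = ∑ q^(n(n-1)/2) z^n / [n]_q!`. -/
noncomputable def qExpE (q : ℝ) (z : ℂ) : ℂ :=
  ∑' n : ℕ, (q : ℂ) ^ (n * (n - 1) / 2) * z ^ n / (qFact q n : ℂ)

/-! The `q`-exponential `e_q(z) = ∑ zⁿ/[n]_q!` satisfies
`e_q(x) e_q(y) = ∑ (x ⊕_q y)ⁿ/[n]_q!`: this is the Cauchy product of the two series, since
`binom_q(n,k) = [n]_q!/([k]_q! [n-k]_q!)`. For `c² = -1`, splitting `e_q(cz)` into even and odd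
terms gives `e_q(cz) = cos_q z + c sin_q z`. Averaging the product formula over `c = i` and
`c = -i` keeps exactly the even terms, which carry the signs `(-1)ⁿ`, and turns the right-hand
side into `cos_q x cos_q y - sin_q x sin_q y`. -/

section QNumbers

variable {q : ℝ}

lemma qNum_pos (hq : |q| < 1) {n : ℕ} (hn : n ≠ 0) : 0 < qNum q n := by
  have hqn : q ^ n < 1 :=
    (le_abs_self _).trans_lt ((abs_pow q n).trans_lt (pow_lt_one₀ (abs_nonneg q) hq hn))
  exact div_pos (by linarith) (by linarith [le_abs_self q])

lemma tendsto_qNum (hq : |q| < 1) : Tendsto (qNum q) atTop (𝓝 (1 / (1 - q))) := by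
  have h := ((tendsto_pow_atTop_nhds_zero_of_abs_lt_one hq).const_sub 1).div_const (1 - q)
  rw [sub_zero] at h
  exact h

lemma qFact_succ (q : ℝ) (n : ℕ) : qFact q (n + 1) = qFact q n * qNum q (n + 1) :=
  Finset.prod_range_succ _ _

lemma qFact_pos (hq : |q| < 1) (n : ℕ) : 0 < qFact q n :=
  Finset.prod_pos fun _ _ => qNum_pos hq (Nat.succ_ne_zero _)

lemma qFact_ofReal_ne_zero (hq : |q| < 1) (n : ℕ) : (qFact q n : ℂ) ≠ 0 :=
  Complex.ofReal_ne_zero.2 (qFact_pos hq n).ne'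

end QNumbers

lemma Complex.norm_eq_one_of_sq_eq_neg_one {c : ℂ} (hc : c ^ 2 = -1) : ‖c‖ = 1 :=
  (pow_eq_one_iff_of_nonneg (norm_nonneg c) two_ne_zero).1
    (by rw [← norm_pow, hc, norm_neg, norm_one])

section QExp

variable {q : ℝ}

lemma norm_pow_div_qFact_succ (hq : |q| < 1) (z : ℂ) (n : ℕ) :
    ‖z ^ (n + 1) / (qFact q (n + 1) : ℂ)‖ =
      ‖z‖ / qNum q (n + 1) * ‖z ^ n / (qFact q n : ℂ)‖ := by
  have hF := qFact_pos hq n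
  have hN := qNum_pos hq (Nat.succ_ne_zero n)
  simp only [norm_div, norm_pow, Complex.norm_real, Real.norm_eq_abs, qFact_succ,
    abs_mul, abs_of_pos hF, abs_of_pos hN]
  field_simp
  ring

lemma summable_norm_pow_div_qFact (hq : |q| < 1) {z : ℂ} (hz : ‖z‖ < 1 / (1 - q)) :
    Summable fun n => ‖z ^ n / (qFact q n : ℂ)‖ := by
  have hq1 : 0 < 1 - q := by linarith [le_abs_self q]
  have hratio : Tendsto (fun n => ‖z‖ / qNum q (n + 1)) atTop (𝓝 (‖z‖ * (1 - q))) := by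
    have h := (tendsto_const_nhds (x := ‖z‖)).div
      ((tendsto_qNum hq).comp (tendsto_add_atTop_nat 1)) (one_div_pos.2 hq1).ne'
    rw [div_div_eq_mul_div, div_one] at h
    exact h
  obtain ⟨r, hzr, hr1⟩ := exists_between ((lt_div_iff₀ hq1).1 hz)
  refine summable_of_ratio_norm_eventually_le hr1 ?_
  filter_upwards [hratio.eventually (gt_mem_nhds hzr)] with n hn
  rw [norm_norm, norm_norm, norm_pow_div_qFact_succ hq]
  exact mul_le_mul_of_nonneg_right hn.le (norm_nonneg _)

lemma hasSum_qExp (hq : |q| < 1) {z : ℂ} (hz : ‖z‖ < 1 / (1 - q)) :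
    HasSum (fun n => z ^ n / (qFact q n : ℂ)) (qExp q z) :=
  (summable_norm_pow_div_qFact hq hz).of_norm.hasSum

lemma hasSum_qAddPow_div_qFact (hq : |q| < 1) {x y : ℂ} (hx : ‖x‖ < 1 / (1 - q))
    (hy : ‖y‖ < 1 / (1 - q)) :
    HasSum (fun n => qAddPow q x y n / (qFact q n : ℂ)) (qExp q x * qExp q y) := by
  have h := hasSum_sum_range_mul_of_summable_norm (summable_norm_pow_div_qFact hq hx)
    (summable_norm_pow_div_qFact hq hy)
  refine h.congr_fun fun n => ?_
  rw [qAddPow, Finset.sum_div]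
  refine Finset.sum_congr rfl fun k _ => ?_
  have hk := qFact_ofReal_ne_zero hq k
  have hnk := qFact_ofReal_ne_zero hq (n - k)
  have hn := qFact_ofReal_ne_zero hq n
  rw [qBinom]
  push_cast
  field_simp

lemma qAddPow_mul_mul (q : ℝ) (c x y : ℂ) (n : ℕ) :
    qAddPow q (c * x) (c * y) n = c ^ n * qAddPow q x y n := by
  rw [qAddPow, qAddPow, Finset.mul_sum]
  refine Finset.sum_congr rfl fun k hk => ?_
  have hcn : c ^ n = c ^ k * c ^ (n - k) := by
    rw [← pow_add, Nat.add_sub_cancel' (Nat.lt_succ_iff.1 (Finset.mem_range.1 hk))]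
  rw [mul_pow, mul_pow, hcn]
  ring

lemma hasSum_qCos_add_mul_qSin (hq : |q| < 1) {c : ℂ} (hc : c ^ 2 = -1) {z : ℂ}
    (hz : ‖z‖ < 1 / (1 - q)) :
    HasSum (fun n => (c * z) ^ n / (qFact q n : ℂ)) (qCos q z + c * qSin q z) := by
  have hs := (hasSum_qExp hq (z := c * z)
    (by rwa [norm_mul, Complex.norm_eq_one_of_sq_eq_neg_one hc, one_mul])).summable
  have heven (k : ℕ) : (c * z) ^ (2 * k) / (qFact q (2 * k) : ℂ) =
      (-1) ^ k * z ^ (2 * k) / (qFact q (2 * k) : ℂ) := by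
    rw [mul_pow, pow_mul, hc]
  have hodd (k : ℕ) : (c * z) ^ (2 * k + 1) / (qFact q (2 * k + 1) : ℂ) =
      c * ((-1) ^ k * z ^ (2 * k + 1) / (qFact q (2 * k + 1) : ℂ)) := by
    rw [mul_pow, pow_succ, pow_mul, hc]
    ring
  have hcos : Summable fun k => (-1) ^ k * z ^ (2 * k) / (qFact q (2 * k) : ℂ) :=
    (hs.comp_injective (mul_right_injective₀ two_ne_zero)).congr heven
  have hsin : Summable fun k => (-1) ^ k * z ^ (2 * k + 1) / (qFact q (2 * k + 1) : ℂ) := by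
    refine ((hs.comp_injective fun a b (h : 2 * a + 1 = 2 * b + 1) => by omega).mul_left (-c)).congr
      fun k => ?_
    rw [Function.comp_apply, hodd, ← mul_assoc, neg_mul, ← sq, hc, neg_neg, one_mul]
  exact HasSum.even_add_odd (by simpa only [heven, qCos] using hcos.hasSum)
    (by simpa only [hodd, qSin] using hsin.hasSum.mul_left c)

lemma hasSum_pow_mul_qAddPow_div_qFact (hq : |q| < 1) {c : ℂ} (hc : c ^ 2 = -1) {x y : ℂ}
    (hx : ‖x‖ < 1 / (1 - q)) (hy : ‖y‖ < 1 / (1 - q)) :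
    HasSum (fun n => c ^ n * qAddPow q x y n / (qFact q n : ℂ))
      ((qCos q x + c * qSin q x) * (qCos q y + c * qSin q y)) := by
  have hnorm (z : ℂ) : ‖c * z‖ = ‖z‖ := by
    rw [norm_mul, Complex.norm_eq_one_of_sq_eq_neg_one hc, one_mul]
  have hcx : qExp q (c * x) = qCos q x + c * qSin q x :=
    (hasSum_qExp hq (by rwa [hnorm])).unique (hasSum_qCos_add_mul_qSin hq hc hx)
  have hcy : qExp q (c * y) = qCos q y + c * qSin q y :=
    (hasSum_qExp hq (by rwa [hnorm])).unique (hasSum_qCos_add_mul_qSin hq hc hy)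
  have h := hasSum_qAddPow_div_qFact hq (x := c * x) (y := c * y) (by rwa [hnorm])
    (by rwa [hnorm])
  rw [hcx, hcy] at h
  simpa only [qAddPow_mul_mul] using h

end QExp

lemma HasSum.comp_two_mul_of_neg_one_pow {𝕜 : Type*} [NormedField 𝕜] [CharZero 𝕜]
    {f : ℕ → 𝕜} {a b : 𝕜} (hf : HasSum f a) (hg : HasSum (fun n => (-1) ^ n * f n) b) :
    HasSum (fun k => f (2 * k)) ((a + b) / 2) := by
  have h := (hf.add hg).div_const 2
  have hodd : ∀ n ∉ Set.range (2 * ·), (f n + (-1) ^ n * f n) / 2 = 0 := by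
    intro n hn
    obtain ⟨k, rfl⟩ : Odd n :=
      Nat.not_even_iff_odd.1 fun ⟨k, hk⟩ => hn ⟨k, (two_mul k).trans hk.symm⟩
    simp [Odd.neg_one_pow ⟨k, rfl⟩]
  rw [← (mul_right_injective₀ two_ne_zero).hasSum_iff hodd] at h
  refine h.congr_fun fun k => ?_
  simp only [Function.comp_apply, pow_mul, neg_one_sq, one_pow, one_mul]
  ring

/-- q-addition formula for cosine:
`cos_q(x ⊕_q y) = cos_q(x) cos_q(y) - sin_q(x) sin_q(y)`. -/
theorem qCos_qAdd (q : ℝ) (hq0 : 0 < q) (hq1 : q < 1) (x y : ℂ)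
    (hx : ‖x‖ < 1 / (1 - q)) (hy : ‖y‖ < 1 / (1 - q)) :
    HasSum (fun n : ℕ => (-1 : ℂ) ^ n * qAddPow q x y (2 * n) / (qFact q (2 * n) : ℂ))
      (qCos q x * qCos q y - qSin q x * qSin q y) := by
  have hq : |q| < 1 := abs_lt.2 ⟨by linarith, hq1⟩
  have hI := hasSum_pow_mul_qAddPow_div_qFact hq Complex.I_sq hx hy
  have hnegI := hasSum_pow_mul_qAddPow_div_qFact hq (c := -Complex.I) (by simp) hx hy
  simp only [neg_pow (Complex.I), mul_assoc] at hnegI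
  have h := hI.comp_two_mul_of_neg_one_pow (by simpa only [mul_div_assoc] using hnegI)
  have hval : ((qCos q x + Complex.I * qSin q x) * (qCos q y + Complex.I * qSin q y) +
      (qCos q x + -Complex.I * qSin q x) * (qCos q y + -Complex.I * qSin q y)) / 2 =
      qCos q x * qCos q y - qSin q x * qSin q y := by
    linear_combination (qSin q x * qSin q y) * Complex.I_sq
  rw [hval] at h
  refine h.congr_fun fun n => ?_
  rw [pow_mul, Complex.I_sq]
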